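/- For every k ∈ ℕ, the set of integers n ∈ ℤ whose canonical Fibonacci representation rep_F(n) has length exactly 2k+1 equals I_k \ I_{k−1}, where I_k = {i ∈ ℤ : −F_{2k} ≤ i < F_{2k+1}} for k ≥ 0 and I_{−1} = ∅. -/

import Mathlib

/-- Fibonacci sequence with `F 0 = 1`, `F 1 = 1`, `F 2 = 2`. -/
def F : ℕ → ℤ
  | 0 => 1
  | 1 => 1
  | (n+2) => F (n+1) + F n

/-- Numerical value of a binary digit. -/
def bv (x : Bool) : ℤ := if x then 1 else 0

/-- Value of an odd-length binary word `w = w_{2k+1} ⋯ w_1` (most significant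
digit first): `val_F(w) = Σ_{i=1}^{2k} w_i F_i − w_{2k+1} F_{2k}`. -/
def valF (w : List Bool) : ℤ :=
  (∑ i ∈ Finset.range (w.length - 1), bv (w.reverse.getD i false) * F (i+1))
    - bv (w.reverse.getD (w.length - 1) false) * F (w.length - 1)

/-- The word has no factor `11`. -/
def no11 (w : List Bool) : Prop :=
  List.Chain' (fun x y => ¬(x = true ∧ y = true)) w

/-- Words of the canonical representation language: odd length, no factor 11,
not beginning with 000 nor with 101. -/
def IsRep (w : List Bool) : Prop :=
  Odd w.length ∧ no11 w ∧
    ¬ ([false, false, false] <+: w) ∧ ¬ ([true, false, true] <+: w)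

/-- `Ik k = {i ∈ ℤ : −F_{2k} ≤ i < F_{2k+1}}`. -/
def Ik (k : ℕ) : Set ℤ := {i : ℤ | -F (2*k) ≤ i ∧ i < F (2*k+1)}

/-- Shifted version of `Ik` incorporating `I_{−1} = ∅`. -/
def Iext : ℕ → Set ℤ
  | 0 => ∅
  | (k+1) => Ik k

/-- The morphism `h : 0 ↦ 00, 1 ↦ 01, 2 ↦ 10` on single letters. -/
def h3 : Fin 3 → List Bool
  | 0 => [false, false]
  | 1 => [false, true]
  | 2 => [true, false]

/-!
Write a word of length `2k+1` as `x :: t`. Then `valF (x :: t) = zeckVal t - x F_{2k}`, where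
`zeckVal` is the ordinary Zeckendorf value, and a word of length `m` without `11` has Zeckendorf
value below `F_{m+1}`; this places `valF` in `I_k`. The forbidden prefixes push it out of `I_{k-1}`:
a leading `1` must be followed by `00`, so the value is below `F_{2k-1} - F_{2k} = -F_{2k-2}`; after
a leading `0` one of the next two digits is `1`, so the value is at least `F_{2k-1}`. As the `I_k`
are nested, the differences `I_k \ I_{k-1}` are disjoint, so `n` determines the length of `rep_F(n)`.
-/

theorem F_eq_fib : ∀ n, F n = Nat.fib (n + 1)
  | 0 => rfl
  | 1 => rfl
  | n + 2 => by
    rw [F, F_eq_fib (n + 1), F_eq_fib n, Nat.fib_add_two (n := n + 1)]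
    push_cast
    ring

theorem F_pos (n : ℕ) : 0 < F n := by
  rw [F_eq_fib]
  exact_mod_cast Nat.fib_pos.2 n.succ_pos

theorem F_mono : Monotone F := fun m n hmn => by
  rw [F_eq_fib, F_eq_fib]
  exact_mod_cast Nat.fib_mono (Nat.succ_le_succ hmn)

@[simp] theorem bv_true : bv true = 1 := rfl

@[simp] theorem bv_false : bv false = 0 := rfl

theorem bv_nonneg (b : Bool) : 0 ≤ bv b := by cases b <;> simp

/-- Zeckendorf value of a word, most significant digit first: the `i`-th digit from the right
(counted from `1`) has weight `F i`. -/
def zeckVal : List Bool → ℤ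
  | [] => 0
  | b :: t => bv b * F (t.length + 1) + zeckVal t

theorem zeckVal_nonneg : ∀ t : List Bool, 0 ≤ zeckVal t
  | [] => le_rfl
  | b :: t => add_nonneg (mul_nonneg (bv_nonneg b) (F_pos _).le) (zeckVal_nonneg t)

theorem zeckVal_lt : ∀ t : List Bool, no11 t → zeckVal t < F (t.length + 1)
  | [], _ => F_pos 1
  | [true], _ => by decide
  | false :: t, ht => by
    have := zeckVal_lt t ht.tail
    have := F_mono (Nat.le_succ (t.length + 1))
    simp only [zeckVal, bv_false, List.length_cons]
    linarith
  | true :: false :: t, ht => by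
    have := zeckVal_lt t ht.tail.tail
    simp only [zeckVal, bv_true, bv_false, List.length_cons]
    rw [F.eq_def (t.length + 1 + 1 + 1)]
    linarith
  | true :: true :: _, ht => absurd (List.rel_of_isChain_cons_cons ht) (by simp)

theorem zeckVal_eq_sum (t : List Bool) :
    zeckVal t = ∑ i ∈ Finset.range t.length, bv (t.reverse.getD i false) * F (i + 1) := by
  induction t with
  | nil => rfl
  | cons b t ih =>
    rw [zeckVal, ih, List.length_cons, Finset.sum_range_succ, add_comm]
    congr 1
    · refine Finset.sum_congr rfl fun i hi => ?_
      rw [List.reverse_cons, List.getD_append _ _ _ _ (by simpa using hi)]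
    · simp [List.getD_eq_getElem?_getD]

theorem valF_cons (x : Bool) (t : List Bool) : valF (x :: t) = zeckVal t - bv x * F t.length := by
  rw [valF, List.length_cons, Nat.add_sub_cancel, zeckVal_eq_sum, List.reverse_cons]
  congr 1
  · refine Finset.sum_congr rfl fun i hi => ?_
    rw [List.getD_append _ _ _ _ (by simpa using hi)]
  · simp [List.getD_eq_getElem?_getD]

theorem valF_mem_Ik {x : Bool} {t : List Bool} {k : ℕ} (hw : no11 (x :: t))
    (hl : t.length = 2 * k) : valF (x :: t) ∈ Ik k := by
  have hlt := zeckVal_lt t hw.tail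
  have := zeckVal_nonneg t
  have : 0 ≤ bv x * F (2 * k) := mul_nonneg (bv_nonneg x) (F_pos _).le
  have : bv x * F (2 * k) ≤ F (2 * k) := by cases x <;> simp [(F_pos _).le]
  rw [hl] at hlt
  rw [valF_cons, hl]
  constructor <;> linarith

theorem valF_notMem_Ik {w : List Bool} {k : ℕ} (hw : IsRep w) (hl : w.length = 2 * k + 3) :
    valF w ∉ Ik k := by
  obtain ⟨-, hno, h000, h101⟩ := hw
  obtain ⟨x, y, z, s, rfl⟩ : ∃ x y z s, w = x :: y :: z :: s := by
    match w, hl with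
    | x :: y :: z :: s, _ => exact ⟨x, y, z, s, rfl⟩
  have hs : s.length = 2 * k := by simpa using hl
  rintro ⟨hlow, hupp⟩
  rw [valF_cons] at hlow hupp
  simp only [List.length_cons, hs] at hlow hupp
  match x, y, z with
  | true, true, _ => exact absurd (List.rel_of_isChain_cons_cons hno) (by simp)
  | true, false, true => exact h101 (by simp)
  | true, false, false =>
    have := zeckVal_lt s hno.tail.tail.tail
    rw [hs] at this
    simp only [zeckVal, bv_false, bv_true, List.length_cons, hs] at hlow
    rw [F.eq_def (2 * k + 1 + 1)] at hlow
    linarith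
  | false, true, c =>
    have := F_mono (by omega : 2 * k + 1 ≤ 2 * k + 2)
    have := zeckVal_nonneg (c :: s)
    rw [zeckVal.eq_2] at hupp
    simp only [bv_true, bv_false, List.length_cons, hs] at hupp
    linarith
  | false, false, true =>
    have := zeckVal_nonneg s
    simp only [zeckVal, bv_true, bv_false, List.length_cons, hs] at hupp
    linarith
  | false, false, false => exact h000 (by simp)

theorem Ik_mono : Monotone Ik := fun m n hmn i ⟨hlow, hupp⟩ =>
  ⟨(neg_le_neg (F_mono (by omega))).trans hlow, hupp.trans_le (F_mono (by omega))⟩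

theorem Iext_mono : Monotone Iext := monotone_nat_of_le_succ fun
  | 0 => Set.empty_subset _
  | k + 1 => Ik_mono k.le_succ

theorem valF_mem_Iext_sdiff {w : List Bool} {k : ℕ} (hw : IsRep w) (hl : w.length = 2 * k + 1) :
    valF w ∈ Iext (k + 1) \ Iext k := by
  obtain ⟨x, t, rfl⟩ := List.exists_cons_of_length_eq_add_one hl
  refine ⟨valF_mem_Ik hw.2.1 (by simpa using hl), ?_⟩
  cases k with
  | zero => exact Set.notMem_empty _
  | succ k => exact valF_notMem_Ik hw (by simp at hl ⊢; omega)

theorem Monotone.eq_of_mem_sdiff_succ {α : Type*} {S : ℕ → Set α} (hS : Monotone S) {a : α}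
    {m k : ℕ} (hm : a ∈ S (m + 1) \ S m) (hk : a ∈ S (k + 1) \ S k) : m = k := by
  rw [← hS.disjointed_add_one] at hm hk
  by_contra hne
  exact Set.disjoint_left.1 (disjoint_disjointed S (by omega : m + 1 ≠ k + 1)) hm hk

/-- Integers whose canonical representation has length exactly `2k+1` are those
in `I_k \ I_{k−1}`. -/
theorem level_sets (repF : ℤ → List Bool)
    (hrep : ∀ n : ℤ, IsRep (repF n) ∧ valF (repF n) = n) (k : ℕ) :
    {n : ℤ | (repF n).length = 2*k+1} = Iext (k+1) \ Iext k := by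
  have level {n : ℤ} {m : ℕ} (hm : (repF n).length = 2 * m + 1) : n ∈ Iext (m + 1) \ Iext m :=
    (hrep n).2 ▸ valF_mem_Iext_sdiff (hrep n).1 hm
  ext n
  refine ⟨level, fun hn => ?_⟩
  obtain ⟨m, hm⟩ := (hrep n).1.1
  show (repF n).length = 2*k+1
  rw [hm, Iext_mono.eq_of_mem_sdiff_succ (level hm) hn]
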